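/- Pinsker's inequality: for probability measures P and Q with P absolutely continuous with respect to Q, the total variation distance satisfies ‖P − Q‖_TV ≤ √(KL(P‖Q)/2). -/

import Mathlib

/-!
Write `f = dP/dQ` and `φ x = x log x - x + 1` (`InformationTheory.klFun`), so that
`KL(P‖Q) = ∫ φ ∘ f dQ`. Each `|P(A) - Q(A)| = |∫_A (f - 1) dQ|` is at most half of
`∫ |f - 1| dQ`, because `f - 1` has `Q`-integral zero. The elementary inequality
`3 (x - 1)² ≤ (2x + 4) φ x` for `x ≥ 0` (the difference has derivative
`4 (x + 1) log x - 8 (x - 1)`, which increases and vanishes at `1`) bounds `|f - 1|` pointwise by `√(((2f + 4)/3) · φ ∘ f)`,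
and `(2f + 4)/3` has `Q`-integral `2`, so Cauchy–Schwarz gives `∫ |f - 1| dQ ≤ √(2 KL(P‖Q))`.
-/

open MeasureTheory

/-- Total variation distance: `‖P − Q‖_TV = sup over measurable A of |P(A) − Q(A)|`. -/
noncomputable def tvDist {Z : Type*} [MeasurableSpace Z] (P Q : Measure Z) : ℝ :=
  ⨆ A : {s : Set Z // MeasurableSet s}, |(P A.1).toReal - (Q A.1).toReal|

/-- KL divergence `KL(P‖Q) = ∫ log(dP/dQ) dP`. -/
noncomputable def klDiv' {Z : Type*} [MeasurableSpace Z] (P Q : Measure Z) : ℝ :=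
  ∫ x, Real.log (P.rnDeriv Q x).toReal ∂P

open Real Set InformationTheory

lemma hasDerivAt_mul_klFun_sub_sq {x : ℝ} (hx : x ≠ 0) :
    HasDerivAt (fun y ↦ (2 * y + 4) * klFun y - 3 * (y - 1) ^ 2)
      (4 * (x + 1) * log x - 8 * (x - 1)) x := by
  refine (((((hasDerivAt_id x).const_mul 2).add_const 4).mul (hasDerivAt_klFun hx)).sub
    ((((hasDerivAt_id x).sub_const 1).pow 2).const_mul 3)).congr_deriv ?_
  simp only [klFun, id]
  ring

lemma monotoneOn_mul_log_sub :
    MonotoneOn (fun y ↦ 4 * (y + 1) * log y - 8 * (y - 1)) (Ioi 0) := by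
  have hderiv : ∀ x ∈ Ioi (0 : ℝ), HasDerivAt (fun y ↦ 4 * (y + 1) * log y - 8 * (y - 1))
      (4 * (log x - (1 - x⁻¹))) x := fun x hx ↦ by
    refine ((((hasDerivAt_id x).add_const 1).const_mul 4).mul (hasDerivAt_log hx.out.ne')).sub
      (((hasDerivAt_id x).sub_const 1).const_mul 8) |>.congr_deriv ?_
    field_simp [hx.out.ne']
    simp only [id]
    ring
  refine monotoneOn_of_deriv_nonneg (convex_Ioi 0)
    (fun x hx ↦ (hderiv x hx).continuousAt.continuousWithinAt)
    (fun x hx ↦ (hderiv x (interior_subset hx)).differentiableAt.differentiableWithinAt)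
    fun x hx ↦ ?_
  rw [interior_Ioi] at hx
  rw [(hderiv x hx).deriv]
  linarith [one_sub_inv_le_log_of_pos hx.out]

lemma three_mul_sq_sub_one_le_mul_klFun {x : ℝ} (hx : 0 ≤ x) :
    3 * (x - 1) ^ 2 ≤ (2 * x + 4) * klFun x := by
  set g := fun y ↦ (2 * y + 4) * klFun y - 3 * (y - 1) ^ 2
  have hcont : Continuous g := by
    have := continuous_klFun
    fun_prop
  have hderiv {y : ℝ} (hy : 0 < y) : deriv g y = 4 * (y + 1) * log y - 8 * (y - 1) :=
    (hasDerivAt_mul_klFun_sub_sq hy.ne').deriv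
  have hdiff {s : Set ℝ} (hs : s ⊆ Ioi 0) : DifferentiableOn ℝ g s := fun y hy ↦
    (hasDerivAt_mul_klFun_sub_sq (hs hy).out.ne').differentiableAt.differentiableWithinAt
  have hmin : IsMinOn g (Ici 0) 1 := by
    refine isMinOn_Ici_of_deriv hcont.continuousAt hcont.continuousAt
      (hdiff Ioo_subset_Ioi_self) (hdiff (Ioi_subset_Ioi zero_le_one)) (fun y hy ↦ ?_)
      fun y hy ↦ ?_
    · simpa [hderiv hy.1] using monotoneOn_mul_log_sub hy.1 (mem_Ioi.2 one_pos) hy.2.le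
    · have hy0 : 0 < y := zero_lt_one.trans hy
      simpa [hderiv hy0] using monotoneOn_mul_log_sub (mem_Ioi.2 one_pos) hy0 hy.out.le
  simpa [g, klFun_one] using hmin hx

section Integral

variable {α : Type*} [MeasurableSpace α] {μ : Measure α}

lemma memLp_two_sqrt {a : α → ℝ} (ha : Integrable a μ) (ha0 : 0 ≤ᵐ[μ] a) :
    MemLp (fun x ↦ √(a x)) 2 μ := by
  refine (memLp_two_iff_integrable_sq (by fun_prop)).2 (ha.congr ?_)
  filter_upwards [ha0] with x hx using (sq_sqrt hx).symm

lemma integral_sqrt_rpow_two {a : α → ℝ} (ha0 : 0 ≤ᵐ[μ] a) :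
    ∫ x, √(a x) ^ (2 : ℝ) ∂μ = ∫ x, a x ∂μ := by
  refine integral_congr_ae ?_
  filter_upwards [ha0] with x hx
  rw [rpow_two, sq_sqrt hx]

lemma integral_le_sqrt_mul_of_sq_le {h a b : α → ℝ} (ha : Integrable a μ) (hb : Integrable b μ)
    (ha0 : 0 ≤ᵐ[μ] a) (hb0 : 0 ≤ᵐ[μ] b) (hab : ∀ᵐ x ∂μ, h x ^ 2 ≤ a x * b x) :
    ∫ x, h x ∂μ ≤ √((∫ x, a x ∂μ) * ∫ x, b x ∂μ) := by
  by_cases hh : Integrable h μ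
  swap
  · rw [integral_undef hh]
    positivity
  have hsa := memLp_two_sqrt ha ha0
  have hsb := memLp_two_sqrt hb hb0
  have hcauchySchwarz := integral_mul_le_Lp_mul_Lq_of_nonneg Real.HolderConjugate.two_two
    (ae_of_all _ fun x ↦ sqrt_nonneg (a x)) (ae_of_all _ fun x ↦ sqrt_nonneg (b x))
    (by simpa using hsa) (by simpa using hsb)
  rw [integral_sqrt_rpow_two ha0, integral_sqrt_rpow_two hb0, ← sqrt_eq_rpow, ← sqrt_eq_rpow,
    ← sqrt_mul (integral_nonneg_of_ae ha0)] at hcauchySchwarz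
  refine le_trans (integral_mono_ae hh (hsa.integrable_mul hsb) ?_) hcauchySchwarz
  filter_upwards [hab, ha0] with x hx hax
  simpa only [Pi.mul_apply, ← sqrt_mul hax] using (le_abs_self _).trans (abs_le_sqrt hx)

lemma abs_setIntegral_le_half_integral_abs {g : α → ℝ} (hg : Integrable g μ)
    (hg0 : ∫ x, g x ∂μ = 0) {s : Set α} (hs : MeasurableSet s) :
    |∫ x in s, g x ∂μ| ≤ (∫ x, |g x| ∂μ) / 2 := by
  have hsplit : ∫ x in s, g x ∂μ + ∫ x in sᶜ, g x ∂μ = 0 := by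
    rw [integral_add_compl hs hg, hg0]
  have habs_split : ∫ x in s, |g x| ∂μ + ∫ x in sᶜ, |g x| ∂μ = ∫ x, |g x| ∂μ :=
    integral_add_compl hs hg.abs
  have hs_le := abs_integral_le_integral_abs (f := g) (μ := μ.restrict s)
  have hsc_le := abs_integral_le_integral_abs (f := g) (μ := μ.restrict sᶜ)
  rw [eq_neg_of_add_eq_zero_right hsplit, abs_neg] at hsc_le
  linarith

lemma integral_abs_sub_one_le_sqrt_integral_klFun [IsProbabilityMeasure μ] {f : α → ℝ}
    (hf : Integrable f μ) (hf0 : 0 ≤ᵐ[μ] f) (hf1 : ∫ x, f x ∂μ = 1)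
    (hkl : Integrable (fun x ↦ klFun (f x)) μ) :
    ∫ x, |f x - 1| ∂μ ≤ √(2 * ∫ x, klFun (f x) ∂μ) := by
  have ha : Integrable (fun x ↦ (2 * f x + 4) / 3) μ :=
    ((hf.const_mul 2).add (integrable_const 4)).div_const 3
  have ha_eq : ∫ x, (2 * f x + 4) / 3 ∂μ = 2 := by
    rw [integral_div, integral_add (hf.const_mul 2) (integrable_const 4), integral_const_mul, hf1]
    norm_num
  rw [← ha_eq]
  refine integral_le_sqrt_mul_of_sq_le ha hkl ?_ ?_ ?_
  · filter_upwards [hf0] with x (hx : 0 ≤ f x)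
    positivity
  · filter_upwards [hf0] with x hx using klFun_nonneg hx
  · filter_upwards [hf0] with x hx
    rw [sq_abs]
    linarith [three_mul_sq_sub_one_le_mul_klFun hx]

end Integral

lemma tvDist_le_half_integral_abs_rnDeriv_sub_one {α : Type*} [MeasurableSpace α]
    {P Q : Measure α} [IsProbabilityMeasure P] [IsProbabilityMeasure Q] (hPQ : P ≪ Q) :
    tvDist P Q ≤ (∫ x, |(P.rnDeriv Q x).toReal - 1| ∂Q) / 2 := by
  have hf : Integrable (fun x ↦ (P.rnDeriv Q x).toReal - 1) Q :=
    Measure.integrable_toReal_rnDeriv.sub (integrable_const 1)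
  have hf0 : ∫ x, ((P.rnDeriv Q x).toReal - 1) ∂Q = 0 := by
    simp [integral_sub Measure.integrable_toReal_rnDeriv (integrable_const 1),
      Measure.integral_toReal_rnDeriv hPQ]
  refine ciSup_le fun ⟨A, hA⟩ ↦ ?_
  have hdiff : (P A).toReal - (Q A).toReal = ∫ x in A, ((P.rnDeriv Q x).toReal - 1) ∂Q := by
    rw [integral_sub Measure.integrable_toReal_rnDeriv.integrableOn (integrable_const 1),
      Measure.setIntegral_toReal_rnDeriv hPQ]
    simp [measureReal_def]
  exact hdiff ▸ abs_setIntegral_le_half_integral_abs hf hf0 hA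

/-- Pinsker's inequality: for probability measures `P ≪ Q`,
`‖P − Q‖_TV ≤ √(KL(P‖Q)/2)`. -/
theorem pinsker_inequality {Z : Type*} [MeasurableSpace Z] (P Q : Measure Z)
    [IsProbabilityMeasure P] [IsProbabilityMeasure Q] (hPQ : P ≪ Q)
    (hInt : Integrable (fun x => Real.log (P.rnDeriv Q x).toReal) P) :
    tvDist P Q ≤ Real.sqrt (klDiv' P Q / 2) := by
  have hKL : ∫ x, klFun (P.rnDeriv Q x).toReal ∂Q = klDiv' P Q := by
    rw [integral_klFun_rnDeriv hPQ hInt]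
    simp only [klDiv', llr, probReal_univ, add_sub_cancel_right]
  have hL1 : ∫ x, |(P.rnDeriv Q x).toReal - 1| ∂Q ≤ √(2 * klDiv' P Q) := by
    rw [← hKL]
    refine integral_abs_sub_one_le_sqrt_integral_klFun Measure.integrable_toReal_rnDeriv
      (ae_of_all _ fun _ ↦ ENNReal.toReal_nonneg) ?_ ((integrable_klFun_rnDeriv_iff hPQ).2 hInt)
    rw [Measure.integral_toReal_rnDeriv hPQ, probReal_univ]
  calc tvDist P Q ≤ (∫ x, |(P.rnDeriv Q x).toReal - 1| ∂Q) / 2 :=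
        tvDist_le_half_integral_abs_rnDeriv_sub_one hPQ
    _ ≤ √(2 * klDiv' P Q) / 2 := by gcongr
    _ = √(klDiv' P Q / 2) := by
        rw [show 2 * klDiv' P Q = 2 ^ 2 * (klDiv' P Q / 2) by ring, sqrt_mul (by positivity),
          sqrt_sq zero_le_two]
        ring
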